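/- Let T = (T_a, T_b) be a rooted binary tree with n = n_a + n_b leaves, n_a ≥ n_b, and let k = ⌈log₂ n⌉. If n_a > 2^{k-1}, then T does not minimize Δ_CS = C - S among rooted binary trees with n leaves. -/

import Mathlib

/-- Rooted binary trees: a leaf, or an internal vertex with two child subtrees. -/
inductive BTree where
  | leaf : BTree
  | node : BTree → BTree → BTree
deriving DecidableEq

namespace BTree

/-- Number of leaves of a rooted binary tree. -/
def numLeaves : BTree → ℕ
  | leaf => 1
  | node l r => numLeaves l + numLeaves r

/-- Sackin index: sum over internal vertices `v` of `n_{v_a} + n_{v_b}`. -/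
def sackin : BTree → ℕ
  | leaf => 0
  | node l r => sackin l + sackin r + (numLeaves l + numLeaves r)

/-- Colless index: sum over internal vertices `v` of `|n_{v_a} - n_{v_b}|`. -/
def colless : BTree → ℕ
  | leaf => 0
  | node l r =>
      colless l + colless r +
        (max (numLeaves l) (numLeaves r) - min (numLeaves l) (numLeaves r))

/-- `N_a`: sum over internal vertices of the larger child-subtree leaf count. -/
def Na : BTree → ℕ
  | leaf => 0
  | node l r => Na l + Na r + max (numLeaves l) (numLeaves r)

/-- `N_b`: sum over internal vertices of the smaller child-subtree leaf count. -/
def Nb : BTree → ℕ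
  | leaf => 0
  | node l r => Nb l + Nb r + min (numLeaves l) (numLeaves r)

/-- `Δ_CS = C - S`, as an integer. -/
def deltaCS (T : BTree) : ℤ := (colless T : ℤ) - (sackin T : ℤ)

/-- Caterpillar trees: every internal vertex has at least one leaf child. -/
def isCaterpillar : BTree → Prop
  | leaf => True
  | node l r => (l = leaf ∧ isCaterpillar r) ∨ (r = leaf ∧ isCaterpillar l)

/-- The fully balanced tree of height `h`. -/
def fbTree : ℕ → BTree
  | 0 => leaf
  | h + 1 => node (fbTree h) (fbTree h)

end BTree

/-!
Since `C + 2 N_b = S`, we have `Δ_CS = -2 N_b`, so minimizing `Δ_CS` means maximizing `N_b`.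
Over trees with `n` leaves the maximum of `N_b` is `g n` (`g = maxNb`), attained by the maximally
balanced tree, and `g` is superadditive: `g a + g b + min a b ≤ g (a + b)`. Moreover
`g (2^j + t) = g (2^j) + g t + t` for `t ≤ 2^j`. Writing `n_a = 2^(k-1) + t` with `t ≥ 1`,
`N_b(T) ≤ g n_a + g n_b + n_b = g (2^(k-1)) + g t + g n_b + t + n_b`, and this is
`< g (2^(k-1)) + g (t + n_b) + t + n_b ≤ g n` because `min t n_b ≥ 1`.
-/

namespace BTree

def maxNb (n : ℕ) : ℕ :=
  if n ≤ 1 then 0 else maxNb ((n + 1) / 2) + maxNb (n / 2) + n / 2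

theorem maxNb_of_le_one {n : ℕ} (hn : n ≤ 1) : maxNb n = 0 := by
  rw [maxNb, if_pos hn]

theorem maxNb_eq (n : ℕ) : maxNb n = maxNb ((n + 1) / 2) + maxNb (n / 2) + n / 2 := by
  by_cases hn : n ≤ 1
  · rw [maxNb_of_le_one hn, maxNb_of_le_one (by omega : (n + 1) / 2 ≤ 1),
      maxNb_of_le_one (by omega : n / 2 ≤ 1)]
    omega
  · rw [maxNb, if_neg hn]

theorem maxNb_add_maxNb_add_min_le (a b : ℕ) : maxNb a + maxNb b + min a b ≤ maxNb (a + b) := by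
  rcases Nat.eq_zero_or_pos a with rfl | ha
  · simp [maxNb_of_le_one]
  rcases Nat.eq_zero_or_pos b with rfl | hb
  · simp [maxNb_of_le_one]
  rw [maxNb_eq a, maxNb_eq b, maxNb_eq (a + b)]
  -- pair the halves of `a` and `b` so that they add up to the halves of `a + b`
  by_cases hodd : a % 2 = 1 ∧ b % 2 = 1
  · have h₁ := maxNb_add_maxNb_add_min_le ((a + 1) / 2) (b / 2)
    have h₂ := maxNb_add_maxNb_add_min_le (a / 2) ((b + 1) / 2)
    rw [show (a + b + 1) / 2 = (a + 1) / 2 + b / 2 by omega,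
      show (a + b) / 2 = a / 2 + (b + 1) / 2 by omega]
    omega
  · have h₁ := maxNb_add_maxNb_add_min_le ((a + 1) / 2) ((b + 1) / 2)
    have h₂ := maxNb_add_maxNb_add_min_le (a / 2) (b / 2)
    rw [show (a + b + 1) / 2 = (a + 1) / 2 + (b + 1) / 2 by omega,
      show (a + b) / 2 = a / 2 + b / 2 by omega]
    omega
termination_by a + b

theorem maxNb_two_pow_add (j : ℕ) {t : ℕ} (ht : t ≤ 2 ^ j) :
    maxNb (2 ^ j + t) = maxNb (2 ^ j) + maxNb t + t := by
  induction j generalizing t with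
  | zero =>
    interval_cases t
    · simp [maxNb_of_le_one]
    · rw [maxNb_eq (2 ^ 0 + 1)]
      norm_num [maxNb_of_le_one]
  | succ j ih =>
    have hpow : 2 ^ (j + 1) = 2 * 2 ^ j := pow_succ' 2 j
    rw [maxNb_eq (2 ^ (j + 1) + t), maxNb_eq (2 ^ (j + 1)), maxNb_eq t,
      show (2 ^ (j + 1) + t + 1) / 2 = 2 ^ j + (t + 1) / 2 by omega,
      show (2 ^ (j + 1) + t) / 2 = 2 ^ j + t / 2 by omega,
      show (2 ^ (j + 1) + 1) / 2 = 2 ^ j by omega, show 2 ^ (j + 1) / 2 = 2 ^ j by omega,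
      ih (by omega), ih (by omega)]
    omega

theorem maxNb_add_maxNb_add_lt_of_two_pow_lt {j a b : ℕ} (hb : 0 < b) (ha : 2 ^ j < a)
    (hab : a + b ≤ 2 ^ (j + 1)) : maxNb a + maxNb b + b < maxNb (a + b) := by
  obtain ⟨t, rfl⟩ : ∃ t, a = 2 ^ j + t := ⟨a - 2 ^ j, by omega⟩
  have hpow : 2 ^ (j + 1) = 2 * 2 ^ j := pow_succ' 2 j
  have split_a := maxNb_two_pow_add j (t := t) (by omega)
  have split_ab := maxNb_two_pow_add j (t := t + b) (by omega)
  have superadd := maxNb_add_maxNb_add_min_le t b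
  rw [← add_assoc] at split_ab
  omega

theorem one_le_numLeaves (T : BTree) : 1 ≤ numLeaves T := by
  induction T with
  | leaf => exact le_rfl
  | node l r _ ihr => simp only [numLeaves]; omega

theorem Nb_le_maxNb (T : BTree) : Nb T ≤ maxNb (numLeaves T) := by
  induction T with
  | leaf => exact Nat.zero_le _
  | node l r ihl ihr =>
    have := maxNb_add_maxNb_add_min_le (numLeaves l) (numLeaves r)
    simp only [Nb, numLeaves]
    omega

theorem deltaCS_eq_neg_two_mul_Nb (T : BTree) : deltaCS T = -2 * Nb T := by
  suffices colless T + 2 * Nb T = sackin T by unfold deltaCS; omega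
  induction T with
  | leaf => rfl
  | node l r ihl ihr =>
    simp only [colless, Nb, sackin]
    omega

def maxBalanced (n : ℕ) : BTree :=
  if n ≤ 1 then leaf else node (maxBalanced ((n + 1) / 2)) (maxBalanced (n / 2))

theorem numLeaves_maxBalanced {n : ℕ} (hn : 1 ≤ n) : numLeaves (maxBalanced n) = n := by
  rw [maxBalanced]
  split_ifs with h
  · simp only [numLeaves]; omega
  · simp only [numLeaves, numLeaves_maxBalanced (by omega : 1 ≤ (n + 1) / 2),
      numLeaves_maxBalanced (by omega : 1 ≤ n / 2)]
    omega

theorem Nb_maxBalanced (n : ℕ) : Nb (maxBalanced n) = maxNb n := by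
  rw [maxBalanced]
  split_ifs with h
  · rw [maxNb_of_le_one h]
    rfl
  · rw [maxNb_eq n]
    simp only [Nb, Nb_maxBalanced ((n + 1) / 2), Nb_maxBalanced (n / 2),
      numLeaves_maxBalanced (by omega : 1 ≤ (n + 1) / 2),
      numLeaves_maxBalanced (by omega : 1 ≤ n / 2)]
    omega

end BTree

open BTree in
theorem not_min_of_large_na_general (Ta Tb : BTree)
    (hbig : 2 ^ (Nat.clog 2 (numLeaves (BTree.node Ta Tb)) - 1) < numLeaves Ta) :
    ∃ T' : BTree, numLeaves T' = numLeaves (BTree.node Ta Tb) ∧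
      deltaCS T' < deltaCS (BTree.node Ta Tb) := by
  have hn : numLeaves (node Ta Tb) = numLeaves Ta + numLeaves Tb := rfl
  rw [hn] at hbig ⊢
  have ha := one_le_numLeaves Ta
  have hb := one_le_numLeaves Tb
  set k := Nat.clog 2 (numLeaves Ta + numLeaves Tb)
  have hab : numLeaves Ta + numLeaves Tb ≤ 2 ^ (k - 1 + 1) := by
    rw [Nat.sub_add_cancel (Nat.clog_pos one_lt_two (by omega))]
    exact Nat.le_pow_clog one_lt_two _
  have hNb : Nb (node Ta Tb) ≤ maxNb (numLeaves Ta) + maxNb (numLeaves Tb) + numLeaves Tb := by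
    have := Nb_le_maxNb Ta
    have := Nb_le_maxNb Tb
    simp only [Nb]
    omega
  have hlt := maxNb_add_maxNb_add_lt_of_two_pow_lt hb hbig hab
  refine ⟨maxBalanced (numLeaves Ta + numLeaves Tb), numLeaves_maxBalanced (by omega), ?_⟩
  rw [deltaCS_eq_neg_two_mul_Nb, deltaCS_eq_neg_two_mul_Nb, Nb_maxBalanced]
  omega

open BTree in
/-- if `T = (T_a, T_b)` with `n_a ≥ n_b` and `n_a > 2^{k-1}` for
`k = ⌈log₂ n⌉`, then `T` does not minimize `Δ_CS` among trees with `n` leaves. -/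
theorem not_min_of_large_na (Ta Tb : BTree) (h : numLeaves Tb ≤ numLeaves Ta)
    (hbig : 2 ^ (Nat.clog 2 (numLeaves (BTree.node Ta Tb)) - 1) < numLeaves Ta) :
    ∃ T' : BTree, numLeaves T' = numLeaves (BTree.node Ta Tb) ∧
      deltaCS T' < deltaCS (BTree.node Ta Tb) :=
  not_min_of_large_na_general Ta Tb hbig
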